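/- Let (V,⊗,I) be a finitely cocomplete symmetric monoidal closed category equipped with a cocategory interval, and let I^• denote the induced cosimplicial object. For any cosimplicial object X^• in V, giving a map of cosimplicial objects f^• : I^• → X^• is equivalent to giving maps f^0 : I → X^0 and f^1 : I^1 → X^1 satisfying f^1 d^0 = d^0 f^0, f^1 d^1 = d^1 f^0 and f^0 p = s^0 f^1, together with a map f^2 : I^2 → X^2 such that f^2 i^0 = d^0 f^1, f^2 i^1 = d^2 f^1 and f^2 c = d^1 f^1. In particular, two maps of cosimplicial objects f^•, g^• : I^• → X^• are equal if and only if f^0 = g^0 and f^1 = g^1. -/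

import Mathlib

open CategoryTheory MonoidalCategory Limits Simplicial

universe v u

/-- A cocategory interval in a monoidal category `V`. -/
structure CocategoryInterval (V : Type u) [Category.{v} V] [MonoidalCategory V] where
  I1 : V
  d0 : 𝟙_ V ⟶ I1
  d1 : 𝟙_ V ⟶ I1
  p : I1 ⟶ 𝟙_ V
  d0_p : d0 ≫ p = 𝟙 (𝟙_ V)
  d1_p : d1 ≫ p = 𝟙 (𝟙_ V)
  I2 : V
  i0 : I1 ⟶ I2
  i1 : I1 ⟶ I2
  isPushout2 : IsPushout d1 d0 i0 i1
  c : I1 ⟶ I2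
  c_d0 : d0 ≫ c = d0 ≫ i0
  c_d1 : d1 ≫ c = d1 ≫ i1
  s0 : I2 ⟶ I1
  i0_s0 : i0 ≫ s0 = 𝟙 I1
  i1_s0 : i1 ≫ s0 = p ≫ d1
  s1 : I2 ⟶ I1
  i1_s1 : i1 ≫ s1 = 𝟙 I1
  i0_s1 : i0 ≫ s1 = p ≫ d0
  counit0 : c ≫ s0 = 𝟙 I1
  counit1 : c ≫ s1 = 𝟙 I1
  I3 : V
  j01 : I2 ⟶ I3
  k2 : I1 ⟶ I3
  isPushout3 : IsPushout (d1 ≫ i1) d0 j01 k2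
  j12 : I2 ⟶ I3
  i0_j12 : i0 ≫ j12 = i1 ≫ j01
  i1_j12 : i1 ≫ j12 = k2
  c₁ : I2 ⟶ I3
  i0_c₁ : i0 ≫ c₁ = c ≫ j01
  i1_c₁ : i1 ≫ c₁ = k2
  c₂ : I2 ⟶ I3
  i0_c₂ : i0 ≫ c₂ = i0 ≫ j01
  i1_c₂ : i1 ≫ c₂ = c ≫ j12
  coassoc : c ≫ c₁ = c ≫ c₂

namespace CocategoryInterval

/-- The last-vertex map `[0] ⟶ [n]`. -/
def lastVertex (n : ℕ) : (⦋0⦌ : SimplexCategory) ⟶ ⦋n⦌ :=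
  SimplexCategory.const _ _ (Fin.last n)

/-- The first-vertex map `[0] ⟶ [1]`. -/
def firstVertex : (⦋0⦌ : SimplexCategory) ⟶ ⦋1⦌ :=
  SimplexCategory.const _ _ 0

/-- The inclusion `[n] ⟶ [n+1]` of the initial segment, i.e. the last coface. -/
def initSegment (n : ℕ) : (⦋n⦌ : SimplexCategory) ⟶ ⦋n + 1⦌ :=
  SimplexCategory.δ (Fin.last (n + 1))

/-- The inclusion `[1] ⟶ [n+1]` of the last edge, `0 ↦ n`, `1 ↦ n+1`. -/
def lastEdge (n : ℕ) : (⦋1⦌ : SimplexCategory) ⟶ ⦋n + 1⦌ :=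
  SimplexCategory.mkHom
    ⟨fun i => ⟨i + n, by omega⟩, fun i j h => by
      simp only [Fin.mk_le_mk]
      exact Nat.add_le_add_right h n⟩

variable {V : Type u} [Category.{v} V] [MonoidalCategory V]

/-- `W` realizes the cosimplicial object `I^•` induced by the cocategory interval `J`:
in degrees `≤ 2` it is given by `𝟙_V`, `I¹` and `I²` with the cofaces and codegeneracies of the
cocategory interval (`d⁰ = i⁰`, `d¹ = c`, `d² = i¹` in degree `2`), and each `W^{n+1}` (`n ≥ 1`)
is the amalgam `W^n ⊔_{W^0} W^1`, glued along the last vertex of `W^n` and the first vertex of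
`W^1`. -/
structure Realization (J : CocategoryInterval V) (W : CosimplicialObject V) where
  e0 : W ^⦋0⦌ ≅ 𝟙_ V
  e1 : W ^⦋1⦌ ≅ J.I1
  e2 : W ^⦋2⦌ ≅ J.I2
  compat_d0 : W.δ (0 : Fin 2) = e0.hom ≫ J.d0 ≫ e1.inv
  compat_d1 : W.δ (1 : Fin 2) = e0.hom ≫ J.d1 ≫ e1.inv
  compat_p : W.σ (0 : Fin 1) = e1.hom ≫ J.p ≫ e0.inv
  compat_i0 : W.δ (0 : Fin 3) = e1.hom ≫ J.i0 ≫ e2.inv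
  compat_c : W.δ (1 : Fin 3) = e1.hom ≫ J.c ≫ e2.inv
  compat_i1 : W.δ (2 : Fin 3) = e1.hom ≫ J.i1 ≫ e2.inv
  amalgam : ∀ n : ℕ, 1 ≤ n →
    IsPushout (W.map (lastVertex n)) (W.map firstVertex)
      (W.map (initSegment n)) (W.map (lastEdge n))

end CocategoryInterval

open CocategoryInterval

/-!
Because `W^{n+2} = W^{n+1} ⊔_{W^0} W^1`, a map out of `W` is determined by its components in
degrees `0` and `1`, and compatible components in degrees `≤ 2` can be glued degree by degree.
Naturality then reduces, along the same pushouts, to maps out of `⦋0⦌` and `⦋1⦌`. An edge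
`⦋1⦌ ⟶ ⦋m + 1⦌` either misses the last vertex (induction on `m`), or is constant at it (the
codegeneracy), or is the composite `δ 1 ≫ t` for the triangle `t = (a, m, m + 1)`; the two other
edges of `t` fall under the previous cases, and `δ 1` is where `f² c = d¹ f¹` enters.
-/

namespace CocategoryInterval

open SimplexCategory

lemma lastVertex_zero : lastVertex 0 = 𝟙 ⦋0⦌ := Subsingleton.elim _ _

lemma lastVertex_one : lastVertex 1 = δ 0 := by decide

lemma firstVertex_eq : firstVertex = δ 1 := by decide

lemma lastEdge_zero : lastEdge 0 = 𝟙 ⦋1⦌ := by decide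

lemma lastEdge_one : lastEdge 1 = δ 0 := by decide

@[simp]
lemma lastEdge_apply (n : ℕ) (i : Fin 2) : ((lastEdge n).toOrderHom i : ℕ) = i + n := rfl

lemma lastVertex_comp_initSegment (n : ℕ) :
    lastVertex n ≫ initSegment n = firstVertex ≫ lastEdge n :=
  Hom.ext_zero_left _ _ (by ext; simp [lastVertex, initSegment, firstVertex, δ])

lemma lastVertex_succ (n : ℕ) : lastVertex (n + 1) = lastVertex 1 ≫ lastEdge n :=
  Hom.ext_zero_left _ _ (by ext; simp [lastVertex]; omega)

lemma initSegment_comp_mkOfLeComp {n : ℕ} (a b c : Fin (n + 1)) (hab : a ≤ b) (hbc : b ≤ c) :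
    initSegment 1 ≫ mkOfLeComp a b c hab hbc = mkOfLe a b hab :=
  Hom.ext_one_left _ _

lemma lastEdge_comp_mkOfLeComp {n : ℕ} (a : Fin (n + 2)) (ha : a ≤ (Fin.last n).castSucc) :
    lastEdge 1 ≫ mkOfLeComp a _ _ ha (Fin.castSucc_le_succ (Fin.last n)) = lastEdge n :=
  Hom.ext_one_left _ _ (Fin.ext (Nat.zero_add _).symm) (Fin.ext (Nat.add_comm _ _))

end CocategoryInterval

namespace CategoryTheory.CosimplicialObject

variable {C : Type*} [Category C] {W X : CosimplicialObject C}

def NaturalAt (f : ∀ n : ℕ, W ^⦋n⦌ ⟶ X ^⦋n⦌) {a b : ℕ} (φ : ⦋a⦌ ⟶ ⦋b⦌) : Prop :=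
  W.map φ ≫ f b = f a ≫ X.map φ

namespace NaturalAt

variable {f : ∀ n : ℕ, W ^⦋n⦌ ⟶ X ^⦋n⦌} {a b c : ℕ}

lemma id (n : ℕ) : NaturalAt f (𝟙 ⦋n⦌) := by
  rw [NaturalAt, W.map_id, X.map_id, Category.id_comp, Category.comp_id]

lemma comp {φ : ⦋a⦌ ⟶ ⦋b⦌} {ψ : ⦋b⦌ ⟶ ⦋c⦌} (hφ : NaturalAt f φ) (hψ : NaturalAt f ψ) :
    NaturalAt f (φ ≫ ψ) := by
  rw [NaturalAt, W.map_comp, X.map_comp, Category.assoc, hψ, reassoc_of% hφ]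

lemma of_isPushout {k l : ℕ} {ι₁ : ⦋k⦌ ⟶ ⦋a⦌} {ι₂ : ⦋l⦌ ⟶ ⦋a⦌} {φ : ⦋a⦌ ⟶ ⦋b⦌} {P : C}
    {u : P ⟶ W ^⦋k⦌} {v : P ⟶ W ^⦋l⦌} (h : IsPushout u v (W.map ι₁) (W.map ι₂))
    (h₁ : NaturalAt f ι₁) (h₂ : NaturalAt f ι₂) (h₁φ : NaturalAt f (ι₁ ≫ φ))
    (h₂φ : NaturalAt f (ι₂ ≫ φ)) : NaturalAt f φ := by
  apply h.hom_ext
  · rw [← Category.assoc, ← W.map_comp, h₁φ, X.map_comp, ← Category.assoc, ← h₁, Category.assoc]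
  · rw [← Category.assoc, ← W.map_comp, h₂φ, X.map_comp, ← Category.assoc, ← h₂, Category.assoc]

end NaturalAt

def IsAmalgam (W : CosimplicialObject C) : Prop :=
  ∀ n : ℕ, IsPushout (W.map (lastVertex (n + 1))) (W.map firstVertex)
    (W.map (initSegment (n + 1))) (W.map (lastEdge (n + 1)))

structure Hom₂ (W X : CosimplicialObject C) where
  app₀ : W ^⦋0⦌ ⟶ X ^⦋0⦌
  app₁ : W ^⦋1⦌ ⟶ X ^⦋1⦌
  app₂ : W ^⦋2⦌ ⟶ X ^⦋2⦌
  δ_app₁ (i : Fin 2) : W.δ i ≫ app₁ = app₀ ≫ X.δ i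
  σ_app₀ : W.σ 0 ≫ app₀ = app₁ ≫ X.σ 0
  δ_app₂ (i : Fin 3) : W.δ i ≫ app₂ = app₁ ≫ X.δ i

namespace Hom₂

variable (hW : W.IsAmalgam) (g : Hom₂ W X)

/-- The last-vertex square is carried along because it is what makes the next component glue. -/
noncomputable def extendAux : ∀ n : ℕ,
    {f : W.obj ⦋n⦌ ⟶ X.obj ⦋n⦌ // W.map (lastVertex n) ≫ f = g.app₀ ≫ X.map (lastVertex n)} :=
  fun n => match n with
  | 0 => ⟨g.app₀, by rw [lastVertex_zero, W.map_id, X.map_id, Category.id_comp, Category.comp_id]⟩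
  | 1 => ⟨g.app₁, by rw [lastVertex_one]; exact g.δ_app₁ 0⟩
  | n + 2 =>
    have hfirst : W.map firstVertex ≫ g.app₁ = g.app₀ ≫ X.map firstVertex := by
      rw [firstVertex_eq]; exact g.δ_app₁ 1
    have hlast : W.map (lastVertex 1) ≫ g.app₁ = g.app₀ ≫ X.map (lastVertex 1) := by
      rw [lastVertex_one]; exact g.δ_app₁ 0
    ⟨(hW n).desc ((extendAux (n + 1)).1 ≫ X.map (initSegment (n + 1)))
        (g.app₁ ≫ X.map (lastEdge (n + 1))) (by
          rw [reassoc_of% (extendAux (n + 1)).2, reassoc_of% hfirst, ← X.map_comp,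
            ← X.map_comp, lastVertex_comp_initSegment]), by
      rw [lastVertex_succ, W.map_comp, Category.assoc, (hW n).inr_desc, reassoc_of% hlast,
        ← X.map_comp]⟩

noncomputable def extendApp (n : ℕ) : W ^⦋n⦌ ⟶ X ^⦋n⦌ := (g.extendAux hW n).1

lemma naturalAt_initSegment (n : ℕ) : NaturalAt (g.extendApp hW) (initSegment n) := by
  cases n with
  | zero => exact g.δ_app₁ 1
  | succ n => exact (hW n).inl_desc _ _ _

lemma naturalAt_lastEdge (n : ℕ) : NaturalAt (g.extendApp hW) (lastEdge n) := by
  cases n with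
  | zero => rw [lastEdge_zero]; exact NaturalAt.id 1
  | succ n => exact (hW n).inr_desc _ _ _

lemma naturalAt_lastVertex (n : ℕ) : NaturalAt (g.extendApp hW) (lastVertex n) :=
  (g.extendAux hW n).2

lemma extendApp_two : g.extendApp hW 2 = g.app₂ :=
  (hW 0).hom_ext (((hW 0).inl_desc _ _ _).trans (g.δ_app₂ 2).symm)
    (((hW 0).inr_desc _ _ _).trans (by rw [lastEdge_one]; exact (g.δ_app₂ 0).symm))

lemma naturalAt_δ_one : NaturalAt (g.extendApp hW) (SimplexCategory.δ (1 : Fin 3)) := by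
  rw [NaturalAt, extendApp_two]; exact g.δ_app₂ 1

lemma naturalAt_edge (b : ℕ) (φ : ⦋1⦌ ⟶ ⦋b⦌) : NaturalAt (g.extendApp hW) φ := by
  induction b with
  | zero => rw [Subsingleton.elim φ (SimplexCategory.σ 0)]; exact g.σ_app₀
  | succ m ih =>
    have below (ψ : ⦋1⦌ ⟶ ⦋m + 1⦌) (hψ : ψ.toOrderHom 1 ≠ Fin.last _) :
        NaturalAt (g.extendApp hW) ψ := by
      rw [← SimplexCategory.factor_δ_spec ψ (Fin.last _) fun k => ne_of_lt
        ((ψ.toOrderHom.monotone (Fin.le_last k)).trans_lt (Fin.lt_last_iff_ne_last.2 hψ))]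
      exact (ih _).comp (g.naturalAt_initSegment hW m)
    by_cases h₁ : φ.toOrderHom 1 = Fin.last _
    · by_cases h₀ : φ.toOrderHom 0 = Fin.last _
      · rw [show φ = SimplexCategory.σ 0 ≫ lastVertex (m + 1) from
          SimplexCategory.Hom.ext_one_left _ _ h₀ h₁]
        exact NaturalAt.comp g.σ_app₀ (g.naturalAt_lastVertex hW _)
      · -- `φ = δ 1 ≫ t` for the triangle `t = (φ 0, m, m + 1)`, glued from two shorter edges.
        have h₀' : φ.toOrderHom 0 ≤ (Fin.last m).castSucc :=
          Fin.le_castSucc_iff.2 (Fin.lt_last_iff_ne_last.2 h₀)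
        rw [show φ = SimplexCategory.δ 1 ≫ SimplexCategory.mkOfLeComp _ _ _ h₀'
          (Fin.castSucc_le_succ _) from SimplexCategory.Hom.ext_one_left _ _ rfl h₁]
        refine (g.naturalAt_δ_one hW).comp (NaturalAt.of_isPushout (hW 0)
          (g.naturalAt_initSegment hW 1) (g.naturalAt_lastEdge hW 1) ?_ ?_)
        · rw [initSegment_comp_mkOfLeComp]; exact below _ (Fin.castSucc_lt_last _).ne
        · rw [lastEdge_comp_mkOfLeComp]; exact g.naturalAt_lastEdge hW m
    · exact below φ h₁

lemma naturalAt {a b : ℕ} (φ : ⦋a⦌ ⟶ ⦋b⦌) : NaturalAt (g.extendApp hW) φ := by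
  induction a generalizing b with
  | zero =>
    rw [show φ = initSegment 0 ≫ SimplexCategory.σ 0 ≫ φ from
      SimplexCategory.Hom.ext_zero_left _ _]
    exact (g.naturalAt_initSegment hW 0).comp (g.naturalAt_edge hW _ _)
  | succ a ih =>
    cases a with
    | zero => exact g.naturalAt_edge hW _ φ
    | succ a =>
      exact NaturalAt.of_isPushout (hW a) (g.naturalAt_initSegment hW _)
        (g.naturalAt_lastEdge hW _) (ih _) (g.naturalAt_edge hW _ _)

noncomputable def extend : W ⟶ X where
  app x := g.extendApp hW x.len
  naturality _ _ φ := g.naturalAt hW φ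

end Hom₂

theorem IsAmalgam.hom_ext (hW : W.IsAmalgam) {F G : W ⟶ X} (h₀ : F.app ⦋0⦌ = G.app ⦋0⦌)
    (h₁ : F.app ⦋1⦌ = G.app ⦋1⦌) : F = G := by
  have hpos (n : ℕ) : F.app ⦋n + 1⦌ = G.app ⦋n + 1⦌ := by
    induction n with
    | zero => exact h₁
    | succ n ih =>
      apply (hW n).hom_ext
      · rw [F.naturality, G.naturality, ih]
      · rw [F.naturality, G.naturality, h₁]
  ext ⟨_ | n⟩
  exacts [h₀, hpos n]

end CategoryTheory.CosimplicialObject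

theorem hom_from_interval_cosimplicial_general
    (V : Type u) [Category.{v} V] [MonoidalCategory V]
    (J : CocategoryInterval V) (W : CosimplicialObject V) (R : Realization J W)
    (X : CosimplicialObject V) :
    (∀ (f0 : 𝟙_ V ⟶ X ^⦋0⦌) (f1 : J.I1 ⟶ X ^⦋1⦌) (f2 : J.I2 ⟶ X ^⦋2⦌),
      J.d0 ≫ f1 = f0 ≫ X.δ (0 : Fin 2) →
      J.d1 ≫ f1 = f0 ≫ X.δ (1 : Fin 2) →
      J.p ≫ f0 = f1 ≫ X.σ (0 : Fin 1) →
      J.i0 ≫ f2 = f1 ≫ X.δ (0 : Fin 3) →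
      J.i1 ≫ f2 = f1 ≫ X.δ (2 : Fin 3) →
      J.c ≫ f2 = f1 ≫ X.δ (1 : Fin 3) →
      ∃ F : W ⟶ X,
        F.app (SimplexCategory.mk 0) = R.e0.hom ≫ f0 ∧
        F.app (SimplexCategory.mk 1) = R.e1.hom ≫ f1 ∧
        F.app (SimplexCategory.mk 2) = R.e2.hom ≫ f2) ∧
    (∀ F G : W ⟶ X,
      F.app (SimplexCategory.mk 0) = G.app (SimplexCategory.mk 0) →
      F.app (SimplexCategory.mk 1) = G.app (SimplexCategory.mk 1) →
      F = G) := by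
  have hW : W.IsAmalgam := fun n => R.amalgam (n + 1) (Nat.le_add_left 1 n)
  refine ⟨fun f0 f1 f2 hd0 hd1 hp hi0 hi1 hc => ?_, fun _ _ => hW.hom_ext⟩
  let g : CosimplicialObject.Hom₂ W X :=
    { app₀ := R.e0.hom ≫ f0
      app₁ := R.e1.hom ≫ f1
      app₂ := R.e2.hom ≫ f2
      δ_app₁ := fun i => by fin_cases i <;> simp [R.compat_d0, R.compat_d1, hd0, hd1]
      σ_app₀ := by simp [R.compat_p, hp]
      δ_app₂ := fun i => by
        fin_cases i <;> simp [R.compat_i0, R.compat_c, R.compat_i1, hi0, hc, hi1] }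
  exact ⟨g.extend hW, rfl, rfl, g.extendApp_two hW⟩

/-- **Gray tensor products of enriched categories, Lemma 5.5.**
Let `(V, ⊗, I)` be a finitely cocomplete symmetric monoidal closed category equipped with a
cocategory interval, inducing the cosimplicial object `I^•` (realized by `W`).  For any
cosimplicial object `X^•` in `V`, to give a map of cosimplicial objects `f^• : I^• ⟶ X^•` is to
give maps `f⁰ : I ⟶ X⁰` and `f¹ : I¹ ⟶ X¹` with `f¹d⁰ = d⁰f⁰`, `f¹d¹ = d¹f⁰`, `f⁰p = s⁰f¹`,
together with `f² : I² ⟶ X²` such that `f² = (d⁰f¹, d²f¹)` and `f²c = d¹f¹`.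
In particular two maps `f^•, g^• : I^• ⟶ X^•` are equal iff `f⁰ = g⁰` and `f¹ = g¹`. -/
theorem hom_from_interval_cosimplicial
    (V : Type u) [Category.{v} V] [MonoidalCategory V] [SymmetricCategory V]
    [MonoidalClosed V] [HasFiniteColimits V]
    (J : CocategoryInterval V) (W : CosimplicialObject V) (R : Realization J W)
    (X : CosimplicialObject V) :
    (∀ (f0 : 𝟙_ V ⟶ X ^⦋0⦌) (f1 : J.I1 ⟶ X ^⦋1⦌) (f2 : J.I2 ⟶ X ^⦋2⦌),
      J.d0 ≫ f1 = f0 ≫ X.δ (0 : Fin 2) →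
      J.d1 ≫ f1 = f0 ≫ X.δ (1 : Fin 2) →
      J.p ≫ f0 = f1 ≫ X.σ (0 : Fin 1) →
      J.i0 ≫ f2 = f1 ≫ X.δ (0 : Fin 3) →
      J.i1 ≫ f2 = f1 ≫ X.δ (2 : Fin 3) →
      J.c ≫ f2 = f1 ≫ X.δ (1 : Fin 3) →
      ∃ F : W ⟶ X,
        F.app (SimplexCategory.mk 0) = R.e0.hom ≫ f0 ∧
        F.app (SimplexCategory.mk 1) = R.e1.hom ≫ f1 ∧
        F.app (SimplexCategory.mk 2) = R.e2.hom ≫ f2) ∧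
    (∀ F G : W ⟶ X,
      F.app (SimplexCategory.mk 0) = G.app (SimplexCategory.mk 0) →
      F.app (SimplexCategory.mk 1) = G.app (SimplexCategory.mk 1) →
      F = G) :=
  hom_from_interval_cosimplicial_general V J W R X
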